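/- For ℓ ∈ ℕ, ℓ ≥ 1, and real x, q, define γ_ℓ(x) := Γ(x)Γ(ℓ+2−x)/(Γ(2−x)Γ(x+ℓ)) and ζ_ℓ(q) := (γ_ℓ(2/q) − 1)/(q − 2). Let α ∈ (−1/2, 1), and assume either (α ∈ (−1/2, 0] and 2 < q < ∞) or (α ∈ (0,1) and 2 < q ≤ 2 + 2/α). Then ζ_ℓ(q) ≤ (ℓ+1)(ℓ+2α)/(2(1+2α)) for all integers ℓ ≥ 1. Equality holds for ℓ = 1; the inequality is strict for all ℓ ≥ 3; and for ℓ = 2 equality holds if and only if α ∈ (0,1) and q = 2 + 2/α. -/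

import Mathlib

/-!
Put `x = 2 / q ∈ (0, 1)`. The functional equation of `Γ` gives
`γ_{ℓ+1}(x) = γ_ℓ(x) (ℓ + 2 - x) / (ℓ + x)`, hence the affine recursion
`ζ_{ℓ+1} = (ζ_ℓ (ℓ + 2 - x) + x) / (ℓ + x)` with `ζ_1 = 1`.
The majorant `H_ℓ(x) = (ℓ + 1)(ℓ - (ℓ - 2) x) / (2 (1 + x))` equals `ζ_ℓ` for `ℓ = 1, 2`, and for
`ℓ ≥ 2` it beats the recursion by `x (ℓ - 1)(ℓ + 2 - x (ℓ + 1)) / (1 + x) > 0`, so `ζ_ℓ < H_ℓ`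
for `ℓ ≥ 3`. Finally the claimed bound exceeds `H_ℓ(x)` by
`(ℓ² - 1)(x (1 + α) - α) / ((1 + 2α)(1 + x))`, and the hypothesis on `(α, q)` says exactly
`x (1 + α) ≥ α`, with equality iff `α > 0` and `q = 2 + 2 / α`.
-/

noncomputable section

/-- `γ_ℓ(x) = Γ(x)Γ(ℓ+2-x)/(Γ(2-x)Γ(x+ℓ))`. -/
def gamCoef (ℓ : ℕ) (x : ℝ) : ℝ :=
  Real.Gamma x * Real.Gamma (ℓ + 2 - x) / (Real.Gamma (2 - x) * Real.Gamma (x + ℓ))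

/-- `ζ_ℓ(q) = (γ_ℓ(2/q) - 1)/(q - 2)`. -/
def zetaCoef (ℓ : ℕ) (q : ℝ) : ℝ := (gamCoef ℓ (2 / q) - 1) / (q - 2)

lemma gamCoef_zero {x : ℝ} (hx₀ : 0 < x) (hx₂ : x < 2) : gamCoef 0 x = 1 := by
  have h₁ := (Real.Gamma_pos_of_pos hx₀).ne'
  have h₂ := (Real.Gamma_pos_of_pos (sub_pos.2 hx₂)).ne'
  simp only [gamCoef, Nat.cast_zero, zero_add, add_zero]
  field_simp

lemma gamCoef_succ (ℓ : ℕ) {x : ℝ} (h₁ : (ℓ : ℝ) + 2 - x ≠ 0) (h₂ : x + ℓ ≠ 0) :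
    gamCoef (ℓ + 1) x = gamCoef ℓ x * (((ℓ : ℝ) + 2 - x) / (ℓ + x)) := by
  have e₁ : ((ℓ + 1 : ℕ) : ℝ) + 2 - x = ((ℓ : ℝ) + 2 - x) + 1 := by push_cast; ring
  have e₂ : x + ((ℓ + 1 : ℕ) : ℝ) = (x + ℓ) + 1 := by push_cast; ring
  rw [gamCoef, gamCoef, e₁, e₂, Real.Gamma_add_one h₁, Real.Gamma_add_one h₂]
  simp only [div_eq_mul_inv, mul_inv]
  ring

lemma zetaCoef_succ {q : ℝ} (hq₁ : 1 < q) (hq₂ : q ≠ 2) (ℓ : ℕ) :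
    zetaCoef (ℓ + 1) q = (zetaCoef ℓ q * ((ℓ : ℝ) + 2 - 2 / q) + 2 / q) / (ℓ + 2 / q) := by
  have hq₀ : 0 < q := by linarith
  have hx₀ : 0 < 2 / q := by positivity
  have hx₂ : 2 / q < 2 := by rw [div_lt_iff₀ hq₀]; linarith
  have hℓ : (0 : ℝ) ≤ ℓ := ℓ.cast_nonneg
  have hq₂' : q - 2 ≠ 0 := sub_ne_zero.2 hq₂
  rw [zetaCoef, zetaCoef, gamCoef_succ ℓ (by linarith) (by linarith)]
  field_simp
  ring

lemma zetaCoef_one {q : ℝ} (hq₁ : 1 < q) (hq₂ : q ≠ 2) : zetaCoef 1 q = 1 := by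
  have hq₀ : 0 < q := by linarith
  have hq₂' : q - 2 ≠ 0 := sub_ne_zero.2 hq₂
  have hx₂ : 2 / q < 2 := by rw [div_lt_iff₀ hq₀]; linarith
  rw [zetaCoef_succ hq₁ hq₂ 0, zetaCoef, gamCoef_zero (by positivity) hx₂]
  field_simp
  ring

def zetaMajorant (x : ℝ) (ℓ : ℕ) : ℝ := ((ℓ : ℝ) + 1) * (ℓ - ((ℓ : ℝ) - 2) * x) / (2 * (1 + x))

lemma zetaCoef_two {q : ℝ} (hq₁ : 1 < q) (hq₂ : q ≠ 2) : zetaCoef 2 q = zetaMajorant (2 / q) 2 := by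
  have hq₀ : 0 < q := by linarith
  rw [zetaCoef_succ hq₁ hq₂ 1, zetaCoef_one hq₁ hq₂, zetaMajorant]
  field_simp
  ring

lemma zetaMajorant_succ_mul_sub {x : ℝ} (hx : 1 + x ≠ 0) (m : ℕ) :
    zetaMajorant x (m + 1) * (m + x) - (zetaMajorant x m * ((m : ℝ) + 2 - x) + x) =
      x * ((m : ℝ) - 1) * ((m : ℝ) + 2 - x * (m + 1)) / (1 + x) := by
  rw [zetaMajorant, zetaMajorant]
  field_simp
  push_cast
  ring

lemma zetaCoef_succ_lt_of_le {q : ℝ} (hq : 2 < q) {m : ℕ} (hm : 2 ≤ m)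
    (h : zetaCoef m q ≤ zetaMajorant (2 / q) m) :
    zetaCoef (m + 1) q < zetaMajorant (2 / q) (m + 1) := by
  have hq₀ : 0 < q := by linarith
  have hx₀ : 0 < 2 / q := by positivity
  have hx₁ : 2 / q < 1 := by rw [div_lt_one hq₀]; linarith
  have hm' : (2 : ℝ) ≤ m := by exact_mod_cast hm
  have hgap : 0 < 2 / q * ((m : ℝ) - 1) * ((m : ℝ) + 2 - 2 / q * (m + 1)) / (1 + 2 / q) := by
    apply div_pos (mul_pos (mul_pos hx₀ (by linarith)) (by nlinarith)) (by linarith)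
  rw [← zetaMajorant_succ_mul_sub (by linarith)] at hgap
  rw [zetaCoef_succ (by linarith) hq.ne', div_lt_iff₀ (by linarith)]
  nlinarith

lemma zetaCoef_lt_zetaMajorant {q : ℝ} (hq : 2 < q) {ℓ : ℕ} (hℓ : 3 ≤ ℓ) :
    zetaCoef ℓ q < zetaMajorant (2 / q) ℓ := by
  induction ℓ, hℓ using Nat.le_induction with
  | base => exact zetaCoef_succ_lt_of_le hq le_rfl (zetaCoef_two (by linarith) hq.ne').le
  | succ n hn ih => exact zetaCoef_succ_lt_of_le hq (by omega) ih.le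

lemma zetaCoef_le_zetaMajorant {q : ℝ} (hq : 2 < q) {ℓ : ℕ} (hℓ : 1 ≤ ℓ) :
    zetaCoef ℓ q ≤ zetaMajorant (2 / q) ℓ := by
  obtain rfl | rfl | hℓ : ℓ = 1 ∨ ℓ = 2 ∨ 3 ≤ ℓ := by omega
  · rw [zetaCoef_one (by linarith) hq.ne', zetaMajorant]
    field_simp
    norm_num
  · exact (zetaCoef_two (by linarith) hq.ne').le
  · exact (zetaCoef_lt_zetaMajorant hq hℓ).le

lemma bound_sub_zetaMajorant {α x : ℝ} (hα : 1 + 2 * α ≠ 0) (hx : 1 + x ≠ 0) (ℓ : ℕ) :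
    ((ℓ : ℝ) + 1) * ((ℓ : ℝ) + 2 * α) / (2 * (1 + 2 * α)) - zetaMajorant x ℓ =
      ((ℓ : ℝ) + 1) * ((ℓ : ℝ) - 1) * (x * (1 + α) - α) / ((1 + 2 * α) * (1 + x)) := by
  rw [zetaMajorant]
  field_simp
  ring

lemma zetaMajorant_le_bound {α x : ℝ} (hα : 0 < 1 + 2 * α) (hx : 0 < 1 + x) (hαx : α ≤ x * (1 + α))
    {ℓ : ℕ} (hℓ : 1 ≤ ℓ) :
    zetaMajorant x ℓ ≤ ((ℓ : ℝ) + 1) * ((ℓ : ℝ) + 2 * α) / (2 * (1 + 2 * α)) := by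
  have hℓ' : (1 : ℝ) ≤ ℓ := by exact_mod_cast hℓ
  rw [← sub_nonneg, bound_sub_zetaMajorant hα.ne' hx.ne']
  have hℓ₁ : (0 : ℝ) ≤ ((ℓ : ℝ) + 1) * ((ℓ : ℝ) - 1) := by nlinarith
  exact div_nonneg (mul_nonneg hℓ₁ (by linarith)) (by positivity)

lemma zetaMajorant_two_eq_bound_iff {α x : ℝ} (hα : 1 + 2 * α ≠ 0) (hx : 1 + x ≠ 0) :
    zetaMajorant x 2 = (2 + 1) * (2 + 2 * α) / (2 * (1 + 2 * α)) ↔ α = x * (1 + α) := by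
  have h := bound_sub_zetaMajorant hα hx 2
  push_cast at h
  rw [eq_comm, ← sub_eq_zero, h]
  constructor
  · intro h0
    field_simp at h0
    linarith
  · intro h0
    rw [← h0]
    ring

lemma eq_two_div_mul_one_add_iff {α q : ℝ} (hq : 2 < q) :
    α = 2 / q * (1 + α) ↔ 0 < α ∧ q = 2 + 2 / α := by
  have hq₀ : q ≠ 0 := by positivity
  rw [div_mul_eq_mul_div, eq_div_iff hq₀]
  constructor
  · intro h
    have hα : 0 < α := by nlinarith
    refine ⟨hα, ?_⟩
    field_simp
    linarith
  · rintro ⟨hα, rfl⟩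
    field_simp
    ring

theorem statement17_general (α q : ℝ) (hα : -(1 / 2) < α)
    (hq : (α ≤ 0 ∧ 2 < q) ∨ (0 < α ∧ 2 < q ∧ q ≤ 2 + 2 / α)) :
    (∀ ℓ : ℕ, 1 ≤ ℓ →
      zetaCoef ℓ q ≤ ((ℓ : ℝ) + 1) * ((ℓ : ℝ) + 2 * α) / (2 * (1 + 2 * α))) ∧
    zetaCoef 1 q = (1 + 1) * (1 + 2 * α) / (2 * (1 + 2 * α)) ∧
    (∀ ℓ : ℕ, 3 ≤ ℓ →
      zetaCoef ℓ q < ((ℓ : ℝ) + 1) * ((ℓ : ℝ) + 2 * α) / (2 * (1 + 2 * α))) ∧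
    (zetaCoef 2 q = (2 + 1) * (2 + 2 * α) / (2 * (1 + 2 * α)) ↔ (0 < α ∧ q = 2 + 2 / α)) := by
  have hq₂ : 2 < q := by rcases hq with ⟨_, h⟩ | ⟨_, h, _⟩ <;> exact h
  have hα₀ : 0 < 1 + 2 * α := by linarith
  have hx₀ : 0 < 1 + 2 / q := by positivity
  have hαx : α ≤ 2 / q * (1 + α) := by
    rcases hq with ⟨hα0, _⟩ | ⟨hα0, _, hqα⟩
    · have : 0 < 2 / q * (1 + α) := by apply mul_pos <;> [positivity; linarith]
      linarith
    · rw [div_mul_eq_mul_div, le_div_iff₀ (by linarith)]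
      have := mul_le_mul_of_nonneg_left hqα hα0.le
      rw [mul_add, mul_div_cancel₀ _ hα0.ne'] at this
      linarith
  have hbound := fun ℓ (hℓ : 1 ≤ ℓ) => zetaMajorant_le_bound hα₀ hx₀ hαx hℓ
  refine ⟨fun ℓ hℓ => (zetaCoef_le_zetaMajorant hq₂ hℓ).trans (hbound ℓ hℓ), ?_,
    fun ℓ hℓ => (zetaCoef_lt_zetaMajorant hq₂ hℓ).trans_le (hbound ℓ (by omega)), ?_⟩
  · rw [zetaCoef_one (by linarith) hq₂.ne']
    field_simp
    norm_num
  · rw [zetaCoef_two (by linarith) hq₂.ne', zetaMajorant_two_eq_bound_iff hα₀.ne' hx₀.ne',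
      eq_two_div_mul_one_add_iff hq₂]

/-- the inequality `ζ_ℓ(q) ≤ (ℓ+1)(ℓ+2α)/(2(1+2α))` with its equality cases. -/
theorem statement17 (α q : ℝ) (hα : -(1 / 2) < α) (hα' : α < 1)
    (hq : (α ≤ 0 ∧ 2 < q) ∨ (0 < α ∧ 2 < q ∧ q ≤ 2 + 2 / α)) :
    (∀ ℓ : ℕ, 1 ≤ ℓ →
      zetaCoef ℓ q ≤ ((ℓ : ℝ) + 1) * ((ℓ : ℝ) + 2 * α) / (2 * (1 + 2 * α))) ∧
    zetaCoef 1 q = (1 + 1) * (1 + 2 * α) / (2 * (1 + 2 * α)) ∧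
    (∀ ℓ : ℕ, 3 ≤ ℓ →
      zetaCoef ℓ q < ((ℓ : ℝ) + 1) * ((ℓ : ℝ) + 2 * α) / (2 * (1 + 2 * α))) ∧
    (zetaCoef 2 q = (2 + 1) * (2 + 2 * α) / (2 * (1 + 2 * α)) ↔ (0 < α ∧ q = 2 + 2 / α)) :=
  statement17_general α q hα hq
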